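/- Let $(V,\sigma_V)$ and $(W,\sigma_W)$ be presymplectic vector spaces. If the canonical Poisson algebras $\mathrm{CanPois}(V,\sigma_V) = (S(V), \{\cdot,\cdot\}_{\sigma_V})$ and $\mathrm{CanPois}(W,\sigma_W) = (S(W), \{\cdot,\cdot\}_{\sigma_W})$ are isomorphic as unital Poisson algebras, then $(V,\sigma_V)$ and $(W,\sigma_W)$ are isomorphic as presymplectic vector spaces. Moreover, given a Poisson algebra isomorphism $\kappa$, the map $L = \pi_{S^1(W)} \circ \kappa|_{S^1(V)}$ (the composition of the restriction of $\kappa$ to degree-one elements with the projection onto degree one) is a presymplectic isomorphism. -/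

import Mathlib

open MvPolynomial

/-- The canonical Poisson bracket on the symmetric algebra `S(V)` (presented as the
polynomial algebra on a basis of `V`) induced by a presymplectic form `σ`. -/
def IsCanPoisBracket {V ι : Type*} [AddCommGroup V] [Module ℝ V]
    (σ : V →ₗ[ℝ] V →ₗ[ℝ] ℝ) (b : Module.Basis ι ℝ V)
    (P : MvPolynomial ι ℝ →ₗ[ℝ] MvPolynomial ι ℝ →ₗ[ℝ] MvPolynomial ι ℝ) : Prop :=
  (∀ i j, P (X i) (X j) = C (σ (b i) (b j))) ∧
  (∀ a c, P a c = - P c a) ∧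
  (∀ a c d, P a (P c d) + P c (P d a) + P d (P a c) = 0) ∧
  (∀ a c d, P a (c * d) = P a c * d + c * P a d)

/-! A unital Poisson isomorphism `Φ` induces, at every point, a linear isomorphism of cotangent
spaces `dxᵢ ↦ d(Φ xᵢ)(p)`; its inverse is the cotangent map of `Φ⁻¹` at the image point, by the
chain rule. Since the bracket is a biderivation, its value at a point depends only on the
gradients there: `{f, g}(p) = σ(∇f(p), ∇g(p))`. Taking `p = 0`, `f = Φ v`, `g = Φ v'` gives
`σ_W(L v, L v') = Φ({v, v'})(0) = σ_V(v, v')`, where `L` is the cotangent map at `0`. Finally, the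
gradient at `0` of a polynomial is its degree-one component. -/

namespace MvPolynomial

variable {R ι κ M N : Type*}

section Gradient

variable [CommSemiring R]

noncomputable def gradAt (p : ι → R) : MvPolynomial ι R →ₗ[R] ι →₀ R where
  toFun f := Finsupp.ofSupportFinite (fun i => aeval p (pderiv i f))
    (f.vars.finite_toSet.subset fun i hi => by
      by_contra h
      exact hi (by simp [pderiv_eq_zero_of_notMem_vars h]))
  map_add' f g := Finsupp.ext fun i => by simp [Finsupp.ofSupportFinite_coe]
  map_smul' r f := Finsupp.ext fun i => by simp [Finsupp.ofSupportFinite_coe]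

@[simp]
theorem gradAt_apply (p : ι → R) (f : MvPolynomial ι R) (i : ι) :
    gradAt p f i = aeval p (pderiv i f) :=
  rfl

@[simp]
theorem gradAt_X (p : ι → R) (j : ι) : gradAt p (X j) = Finsupp.single j 1 := by
  classical
  ext i
  simp [pderiv_X, Pi.single_apply, Finsupp.single_apply]

theorem gradAt_linearCombination_X (p : ι → R) (c : ι →₀ R) :
    gradAt p (Finsupp.linearCombination R X c) = c := by
  have : gradAt p ∘ₗ Finsupp.linearCombination R X = LinearMap.id :=
    Finsupp.lhom_ext' fun i => LinearMap.ext_ring (by simp)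
  exact LinearMap.congr_fun this c

theorem gradAt_zero_apply (f : MvPolynomial ι R) (i : ι) :
    gradAt 0 f i = coeff (Finsupp.single i 1) f := by
  simp [constantCoeff_eq, coeff_pderiv]

theorem linearCombination_X_gradAt_zero (f : MvPolynomial ι R) :
    Finsupp.linearCombination R X (gradAt 0 f) = homogeneousComponent 1 f := by
  classical
  induction f using MvPolynomial.induction_on' with
  | add f g hf hg => simp only [map_add, hf, hg]
  | monomial d r =>
    rw [homogeneousComponent_of_mem (isHomogeneous_monomial r rfl)]
    by_cases hd : ∃ j, Finsupp.single j 1 = d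
    · obtain ⟨j, rfl⟩ := hd
      have hX : monomial (Finsupp.single j 1) r = r • X j := by
        rw [X, smul_monomial, smul_eq_mul, mul_one]
      simp [hX]
    · have hdeg : 1 ≠ d.degree := fun h =>
        hd (Finsupp.range_single_one.symm.subset h.symm)
      have hgrad : gradAt 0 (monomial d r) = 0 := Finsupp.ext fun i => by
        rw [gradAt_zero_apply, coeff_monomial, if_neg fun h => hd ⟨i, h.symm⟩, Finsupp.zero_apply]
      rw [hgrad, map_zero, if_neg hdeg]

theorem aeval_algHom_X (p : ι → R) (ψ : MvPolynomial κ R →ₐ[R] MvPolynomial ι R)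
    (f : MvPolynomial κ R) : aeval (fun j => aeval p (ψ (X j))) f = aeval p (ψ f) :=
  (DFunLike.congr_fun (aeval_unique ((aeval p).comp ψ)) f).symm

def IsPointDerivation [AddCommMonoid M] [Module R M] (p : ι → R)
    (D : MvPolynomial ι R →ₗ[R] M) : Prop :=
  ∀ f g, D (f * g) = aeval p f • D g + aeval p g • D f

theorem isPointDerivation_gradAt (p : ι → R) : IsPointDerivation p (gradAt p) := fun f g =>
  Finsupp.ext fun i => by simp

namespace IsPointDerivation

variable {p : ι → R}

section

variable [AddCommMonoid M] [Module R M] [AddCommMonoid N] [Module R N]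
  {D : MvPolynomial ι R →ₗ[R] M}

theorem comp (hD : IsPointDerivation p D) (T : M →ₗ[R] N) : IsPointDerivation p (T ∘ₗ D) :=
  fun f g => by simp [hD f g]

theorem comp_algHom (hD : IsPointDerivation p D) (ψ : MvPolynomial κ R →ₐ[R] MvPolynomial ι R) :
    IsPointDerivation (fun j => aeval p (ψ (X j))) (D ∘ₗ ψ.toLinearMap) := fun f g => by
  simp only [LinearMap.comp_apply, AlgHom.toLinearMap_apply, map_mul, hD (ψ f) (ψ g),
    aeval_algHom_X p ψ f, aeval_algHom_X p ψ g]

end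

theorem ext [AddCommGroup M] [Module R M] {D₁ D₂ : MvPolynomial ι R →ₗ[R] M}
    (h₁ : IsPointDerivation p D₁) (h₂ : IsPointDerivation p D₂) (h : ∀ i, D₁ (X i) = D₂ (X i)) :
    D₁ = D₂ := by
  have hC : ∀ {D : MvPolynomial ι R →ₗ[R] M}, IsPointDerivation p D → ∀ r, D (C r) = 0 := by
    intro D hD r
    have h1 : D 1 = 0 := by simpa using hD 1 1
    rw [C_eq_smul_one, map_smul, h1, smul_zero]
  refine LinearMap.ext fun f => ?_
  induction f using MvPolynomial.induction_on with
  | C r => rw [hC h₁, hC h₂]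
  | add f g hf hg => rw [map_add, map_add, hf, hg]
  | mul_X f i hf => rw [h₁, h₂, hf, h i]

end IsPointDerivation

end Gradient

section CommRing

variable [CommRing R]

theorem gradAt_algHom (ψ : MvPolynomial κ R →ₐ[R] MvPolynomial ι R) (p : ι → R)
    (f : MvPolynomial κ R) :
    gradAt p (ψ f) =
      gradAt p (ψ (Finsupp.linearCombination R X (gradAt (fun j => aeval p (ψ (X j))) f))) := by
  have h := ((isPointDerivation_gradAt p).comp_algHom ψ).ext
    ((isPointDerivation_gradAt _).comp (gradAt p ∘ₗ ψ.toLinearMap ∘ₗ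
      Finsupp.linearCombination R X)) fun j => by simp
  exact LinearMap.congr_fun h f

noncomputable def cotangentEquiv (Φ : MvPolynomial ι R ≃ₐ[R] MvPolynomial κ R) (p : κ → R) :
    (ι →₀ R) ≃ₗ[R] (κ →₀ R) := by
  let φ : MvPolynomial ι R →ₐ[R] MvPolynomial κ R := Φ
  let ψ : MvPolynomial κ R →ₐ[R] MvPolynomial ι R := Φ.symm
  let a : ι → R := fun i => aeval p (φ (X i))
  have ha : (fun j => aeval a (ψ (X j))) = p := by
    funext j
    simpa [a, φ, ψ] using aeval_algHom_X p φ (ψ (X j))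
  refine .ofLinearMap (gradAt p ∘ₗ φ.toLinearMap ∘ₗ Finsupp.linearCombination R X)
    (gradAt a ∘ₗ ψ.toLinearMap ∘ₗ Finsupp.linearCombination R X)
    (LinearMap.ext fun c => ?_) (LinearMap.ext fun c => ?_)
  · simpa [a, φ, ψ, gradAt_linearCombination_X] using
      (gradAt_algHom φ p (ψ (Finsupp.linearCombination R X c))).symm
  · have h := gradAt_algHom ψ a (φ (Finsupp.linearCombination R X c))
    rw [ha] at h
    simpa [φ, ψ, gradAt_linearCombination_X] using h.symm

@[simp]
theorem cotangentEquiv_apply (Φ : MvPolynomial ι R ≃ₐ[R] MvPolynomial κ R) (p : κ → R)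
    (c : ι →₀ R) : cotangentEquiv Φ p c = gradAt p (Φ (Finsupp.linearCombination R X c)) :=
  rfl

theorem aeval_bracket_eq {P : MvPolynomial ι R →ₗ[R] MvPolynomial ι R →ₗ[R] MvPolynomial ι R}
    (hanti : ∀ f g, P f g = -P g f) (hleib : ∀ f g h, P f (g * h) = P f g * h + g * P f h)
    (p : ι → R) (β : (ι →₀ R) →ₗ[R] (ι →₀ R) →ₗ[R] R)
    (hβ : ∀ i j, aeval p (P (X i) (X j)) = β (Finsupp.single i 1) (Finsupp.single j 1))
    (f g : MvPolynomial ι R) :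
    aeval p (P f g) = β (gradAt p f) (gradAt p g) := by
  have right (f) : IsPointDerivation p ((aeval p).toLinearMap ∘ₗ P f) := fun g h => by
    simp only [LinearMap.comp_apply, AlgHom.toLinearMap_apply, hleib, map_add, map_mul,
      smul_eq_mul]
    ring
  have left (g) : IsPointDerivation p ((aeval p).toLinearMap ∘ₗ P.flip g) := fun f h => by
    have := right g f h
    simp only [LinearMap.comp_apply, LinearMap.flip_apply, AlgHom.toLinearMap_apply,
      smul_eq_mul] at this ⊢
    rw [hanti (f * h), hanti h, hanti f, map_neg, map_neg, map_neg, this]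
    ring
  have hX (f) (j) : aeval p (P f (X j)) = β (gradAt p f) (Finsupp.single j 1) :=
    LinearMap.congr_fun ((left (X j)).ext ((isPointDerivation_gradAt p).comp
      (β.flip (Finsupp.single j 1))) fun i => by simpa using hβ i j) f
  exact LinearMap.congr_fun ((right f).ext ((isPointDerivation_gradAt p).comp
    (β (gradAt p f))) fun j => by simpa using hX f j) g

end CommRing

end MvPolynomial

theorem Module.Basis.constr_apply_eq_linearCombination {R S M M' ι : Type*} [Semiring R]
    [AddCommMonoid M] [Module R M] [AddCommMonoid M'] [Module R M'] [Semiring S] [Module S M']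
    [SMulCommClass R S M'] (b : Module.Basis ι R M) (f : ι → M') (x : M) :
    b.constr S f x = Finsupp.linearCombination R f (b.repr x) := by
  rw [constr_apply, Finsupp.linearCombination_apply]

namespace IsCanPoisBracket

variable {V ι : Type*} [AddCommGroup V] [Module ℝ V] {σ : V →ₗ[ℝ] V →ₗ[ℝ] ℝ}
  {b : Module.Basis ι ℝ V} {P : MvPolynomial ι ℝ →ₗ[ℝ] MvPolynomial ι ℝ →ₗ[ℝ] MvPolynomial ι ℝ}

theorem apply_constr_X (h : IsCanPoisBracket σ b P) (v w : V) :
    P (b.constr ℝ X v) (b.constr ℝ X w) = C (σ v w) := by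
  have : P.compl₁₂ (b.constr ℝ X) (b.constr ℝ X) = σ.compr₂ (Algebra.linearMap ℝ _) :=
    b.ext fun i => b.ext fun j => by simpa using h.1 i j
  exact LinearMap.congr_fun₂ this v w

theorem aeval_apply (h : IsCanPoisBracket σ b P) (p : ι → ℝ) (f g : MvPolynomial ι ℝ) :
    aeval p (P f g) = σ (b.repr.symm (gradAt p f)) (b.repr.symm (gradAt p g)) :=
  aeval_bracket_eq h.2.1 h.2.2.2 p (σ.compl₁₂ b.repr.symm.toLinearMap b.repr.symm.toLinearMap)
    (fun i j => by simp [h.1 i j]) f g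

end IsCanPoisBracket

theorem stmt2_general {V W ι κ' : Type*} [AddCommGroup V] [Module ℝ V] [AddCommGroup W] [Module ℝ W]
    (σV : V →ₗ[ℝ] V →ₗ[ℝ] ℝ) (σW : W →ₗ[ℝ] W →ₗ[ℝ] ℝ)
    (bV : Module.Basis ι ℝ V) (bW : Module.Basis κ' ℝ W)
    (PV : MvPolynomial ι ℝ →ₗ[ℝ] MvPolynomial ι ℝ →ₗ[ℝ] MvPolynomial ι ℝ)
    (PW : MvPolynomial κ' ℝ →ₗ[ℝ] MvPolynomial κ' ℝ →ₗ[ℝ] MvPolynomial κ' ℝ)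
    (hPV : IsCanPoisBracket σV bV PV) (hPW : IsCanPoisBracket σW bW PW)
    -- a unital Poisson algebra isomorphism κ
    (Φ : MvPolynomial ι ℝ ≃ₐ[ℝ] MvPolynomial κ' ℝ)
    (hΦ : ∀ a c, Φ (PV a c) = PW (Φ a) (Φ c)) :
    ∃ L : V ≃ₗ[ℝ] W,
      (∀ v v', σW (L v) (L v') = σV v v') ∧
      -- `L` is the composite of the restriction of `Φ` to degree one with the projection
      -- onto the degree-one component (identifying `V`, `W` with the degree-one parts via
      -- the linear inclusions determined by the bases)
      (∀ v, (bW.constr ℝ fun j => (X j : MvPolynomial κ' ℝ)) (L v)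
          = homogeneousComponent 1 (Φ ((bV.constr ℝ fun i => (X i : MvPolynomial ι ℝ)) v))) := by
  have hL (v : V) : (bV.repr ≪≫ₗ cotangentEquiv Φ 0 ≪≫ₗ bW.repr.symm) v =
      bW.repr.symm (gradAt 0 (Φ (bV.constr ℝ X v))) := by
    rw [LinearEquiv.trans_apply, LinearEquiv.trans_apply, cotangentEquiv_apply,
      bV.constr_apply_eq_linearCombination]
  refine ⟨bV.repr ≪≫ₗ cotangentEquiv Φ 0 ≪≫ₗ bW.repr.symm, fun v v' => ?_, fun v => ?_⟩
  · rw [hL, hL, ← hPW.aeval_apply, ← hΦ, hPV.apply_constr_X, ← algebraMap_eq, AlgEquiv.commutes,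
      algebraMap_eq, aeval_C, Algebra.algebraMap_self_apply]
  · rw [hL, bW.constr_apply_eq_linearCombination, LinearEquiv.apply_symm_apply,
      linearCombination_X_gradAt_zero]

/-- If the canonical Poisson algebras `CanPois(V,σV)` and `CanPois(W,σW)` are
isomorphic as unital Poisson algebras, then `(V,σV)` and `(W,σW)` are isomorphic as
presymplectic vector spaces; moreover `L = π_{S¹(W)} ∘ κ|_{S¹(V)}` is such a presymplectic
isomorphism. -/
theorem stmt2 {V W ι κ' : Type*} [AddCommGroup V] [Module ℝ V] [AddCommGroup W] [Module ℝ W]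
    (σV : V →ₗ[ℝ] V →ₗ[ℝ] ℝ) (σW : W →ₗ[ℝ] W →ₗ[ℝ] ℝ)
    (hσV : ∀ v w, σV v w = - σV w v) (hσW : ∀ v w, σW v w = - σW w v)
    (bV : Module.Basis ι ℝ V) (bW : Module.Basis κ' ℝ W)
    (PV : MvPolynomial ι ℝ →ₗ[ℝ] MvPolynomial ι ℝ →ₗ[ℝ] MvPolynomial ι ℝ)
    (PW : MvPolynomial κ' ℝ →ₗ[ℝ] MvPolynomial κ' ℝ →ₗ[ℝ] MvPolynomial κ' ℝ)
    (hPV : IsCanPoisBracket σV bV PV) (hPW : IsCanPoisBracket σW bW PW)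
    -- a unital Poisson algebra isomorphism κ
    (Φ : MvPolynomial ι ℝ ≃ₐ[ℝ] MvPolynomial κ' ℝ)
    (hΦ : ∀ a c, Φ (PV a c) = PW (Φ a) (Φ c)) :
    ∃ L : V ≃ₗ[ℝ] W,
      (∀ v v', σW (L v) (L v') = σV v v') ∧
      -- `L` is the composite of the restriction of `Φ` to degree one with the projection
      -- onto the degree-one component (identifying `V`, `W` with the degree-one parts via
      -- the linear inclusions determined by the bases)
      (∀ v, (bW.constr ℝ fun j => (X j : MvPolynomial κ' ℝ)) (L v)
          = homogeneousComponent 1 (Φ ((bV.constr ℝ fun i => (X i : MvPolynomial ι ℝ)) v))) :=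
  stmt2_general σV σW bV bW PV PW hPV hPW Φ hΦ
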